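/- arXiv:1003.2821 — 10 statements merged into one kernel-verified Lean document; each statement's English description precedes it below -/
import Mathlib

section
/- If C is a conjugation on ℂⁿ and T ∈ Mₙ(ℂ) has n distinct singular values, then T*T = C(TT*)C implies T = C T* C. -/
open scoped ComplexConjugate
open Matrix

/-- Paper-convention inner product on ℂⁿ: ⟨x,y⟩ = ∑ xᵢ conj(yᵢ). -/
noncomputable def cinner {n : ℕ} (x y : Fin n → ℂ) : ℂ := ∑ i, x i * conj (y i)

/-- A conjugation on ℂⁿ: a conjugate-linear isometric involution. -/
structure Conjugation (n : ℕ) where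
  toFun : (Fin n → ℂ) → (Fin n → ℂ)
  map_add : ∀ x y, toFun (x + y) = toFun x + toFun y
  map_smul : ∀ (a : ℂ) (x), toFun (a • x) = conj a • toFun x
  isometric : ∀ x y, cinner (toFun x) (toFun y) = cinner y x
  involutive : ∀ x, toFun (toFun x) = x

/-- `T` is unitarily equivalent to a complex symmetric matrix. -/
def UECSM {n : ℕ} (T : Matrix (Fin n) (Fin n) ℂ) : Prop :=
  ∃ Q ∈ Matrix.unitaryGroup (Fin n) ℂ, (Qᴴ * T * Q)ᵀ = Qᴴ * T * Q

/-!
Let `v i` be an orthonormal eigenbasis of `T*T`. Since `C` intertwines `T*T` and `TT*`, both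
`C T v i` and `T* C v i` are eigenvectors of `T*T` for the eigenvalue of `v i`, and the isometry
property of `C` shows that they have the same component along `v i`. The eigenvalues being simple,
the two vectors coincide. So the conjugate-linear maps `C T` and `T* C` agree on a basis, hence
everywhere, and `T = C T* C` because `C` is an involution.
-/

open Module

theorem Module.Basis.eigenspace_le_span_singleton {ι K V : Type*} [Fintype ι] [Field K]
    [AddCommGroup V] [Module K V] (b : Basis ι K V) {f : End K V} {μ : ι → K}
    (hμ : Function.Injective μ) (hb : ∀ j, f (b j) = μ j • b j) (i : ι) :
    f.eigenspace (μ i) ≤ K ∙ b i := by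
  intro w hw
  have hfw : f w = ∑ j, (μ j * b.repr w j) • b j := by
    nth_rw 1 [← b.sum_repr w]
    simp only [map_sum, map_smul, hb, smul_smul, mul_comm]
  have hzero : ∀ j ≠ i, b.repr w j = 0 := by
    intro j hj
    have h := congrFun (b.repr_sum_self fun j => μ j * b.repr w j) j
    rw [← hfw, Module.End.mem_eigenspace_iff.mp hw, map_smul, Finsupp.smul_apply,
      smul_eq_mul] at h
    exact (mul_eq_mul_right_iff.mp h).resolve_left fun h' => hj (hμ h'.symm)
  rw [Submodule.mem_span_singleton]
  refine ⟨b.repr w i, ?_⟩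
  conv_rhs => rw [← b.sum_repr w]
  rw [Finset.sum_eq_single i (fun j _ hj => by rw [hzero j hj, zero_smul]) (by simp)]

namespace Matrix.IsHermitian

variable {𝕜 ι : Type*} [RCLike 𝕜] [Fintype ι] [DecidableEq ι] {A : Matrix ι ι 𝕜}
  (hA : A.IsHermitian)

noncomputable def eigenvectorBasisFun : Module.Basis ι 𝕜 (ι → 𝕜) :=
  hA.eigenvectorBasis.toBasis.map (WithLp.linearEquiv 2 𝕜 (ι → 𝕜))

@[simp]
theorem eigenvectorBasisFun_apply (i : ι) :
    hA.eigenvectorBasisFun i = ⇑(hA.eigenvectorBasis i) := by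
  simp [eigenvectorBasisFun]

theorem mulVec_eigenvectorBasisFun (i : ι) :
    A *ᵥ hA.eigenvectorBasisFun i = (hA.eigenvalues i : 𝕜) • hA.eigenvectorBasisFun i := by
  rw [eigenvectorBasisFun_apply, hA.mulVec_eigenvectorBasis,
    RCLike.real_smul_eq_coe_smul (K := 𝕜)]

theorem star_eigenvectorBasisFun_dotProduct_self (i : ι) :
    star (hA.eigenvectorBasisFun i) ⬝ᵥ hA.eigenvectorBasisFun i = 1 := by
  rw [dotProduct_comm, eigenvectorBasisFun_apply]
  exact hA.eigenvectorBasis.inner_eq_one i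

theorem eq_of_mulVec_eq_smul (hinj : Function.Injective hA.eigenvalues) {i : ι} {w w' : ι → 𝕜}
    (hw : A *ᵥ w = (hA.eigenvalues i : 𝕜) • w) (hw' : A *ᵥ w' = (hA.eigenvalues i : 𝕜) • w')
    (hcomp : star (hA.eigenvectorBasisFun i) ⬝ᵥ w = star (hA.eigenvectorBasisFun i) ⬝ᵥ w') :
    w = w' := by
  have hmem : w - w' ∈ Module.End.eigenspace (toLin' A) (hA.eigenvalues i : 𝕜) := by
    rw [Module.End.mem_eigenspace_iff, toLin'_apply, mulVec_sub, hw, hw', smul_sub]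
  obtain ⟨c, hc⟩ := Submodule.mem_span_singleton.mp <|
    hA.eigenvectorBasisFun.eigenspace_le_span_singleton (RCLike.ofReal_injective.comp hinj)
      (fun j => by rw [toLin'_apply, mulVec_eigenvectorBasisFun]; rfl) i hmem
  have hc0 : c = 0 := by
    have h := congrArg (star (hA.eigenvectorBasisFun i) ⬝ᵥ ·) hc
    simpa only [dotProduct_smul, smul_eq_mul, star_eigenvectorBasisFun_dotProduct_self, mul_one,
      dotProduct_sub, hcomp, sub_self] using h
  rw [← sub_eq_zero, ← hc, hc0, zero_smul]

end Matrix.IsHermitian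

theorem cinner_eq_star_dotProduct {n : ℕ} (x y : Fin n → ℂ) : cinner x y = star y ⬝ᵥ x := by
  simp only [cinner, dotProduct, Pi.star_apply, RCLike.star_def, mul_comm]

namespace Conjugation

variable {n : ℕ} (C : Conjugation n)

def toStarLinearMap : (Fin n → ℂ) →ₗ⋆[ℂ] (Fin n → ℂ) where
  toFun := C.toFun
  map_add' := C.map_add
  map_smul' := C.map_smul

theorem star_toFun_dotProduct_toFun (x y : Fin n → ℂ) :
    star (C.toFun x) ⬝ᵥ C.toFun y = star y ⬝ᵥ x := by
  rw [← cinner_eq_star_dotProduct, C.isometric, cinner_eq_star_dotProduct]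

variable (T : Matrix (Fin n) (Fin n) ℂ)

theorem star_dotProduct_toFun_mulVec (x y : Fin n → ℂ) :
    star y ⬝ᵥ C.toFun (T *ᵥ x) = star x ⬝ᵥ (Tᴴ *ᵥ C.toFun y) := by
  rw [← C.involutive y, star_toFun_dotProduct_toFun, C.involutive, star_mulVec,
    dotProduct_mulVec]

variable {T} (h : ∀ x, (Tᴴ * T) *ᵥ x = C.toFun ((T * Tᴴ) *ᵥ C.toFun x)) {μ : ℝ} {v : Fin n → ℂ}
  (hv : (Tᴴ * T) *ᵥ v = (μ : ℂ) • v)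
include h hv

theorem mulVec_toFun_mulVec_eq_smul :
    (Tᴴ * T) *ᵥ C.toFun (T *ᵥ v) = (μ : ℂ) • C.toFun (T *ᵥ v) := by
  rw [h, C.involutive, mulVec_mulVec, Matrix.mul_assoc, ← mulVec_mulVec, hv, mulVec_smul,
    C.map_smul, Complex.conj_ofReal]

theorem mulVec_conjTranspose_mulVec_toFun_eq_smul :
    (Tᴴ * T) *ᵥ (Tᴴ *ᵥ C.toFun v) = (μ : ℂ) • (Tᴴ *ᵥ C.toFun v) := by
  have hB : (T * Tᴴ) *ᵥ C.toFun v = C.toFun ((Tᴴ * T) *ᵥ v) := by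
    rw [h, C.involutive]
  rw [mulVec_mulVec, Matrix.mul_assoc, ← mulVec_mulVec, hB, hv, C.map_smul, Complex.conj_ofReal,
    mulVec_smul]

end Conjugation

theorem conj_symmetric_of_mul_star_conj {n : ℕ} (C : Conjugation n)
    (T : Matrix (Fin n) (Fin n) ℂ)
    (hdist : Function.Injective (Matrix.isHermitian_conjTranspose_mul_self T).eigenvalues)
    (h : ∀ x : Fin n → ℂ, (Tᴴ * T).mulVec x = C.toFun ((T * Tᴴ).mulVec (C.toFun x))) :
    ∀ x : Fin n → ℂ, T.mulVec x = C.toFun (Tᴴ.mulVec (C.toFun x)) := by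
  have hA := isHermitian_conjTranspose_mul_self T
  have hbasis : ∀ i, C.toFun (T *ᵥ hA.eigenvectorBasisFun i) =
      Tᴴ *ᵥ C.toFun (hA.eigenvectorBasisFun i) := fun i =>
    have hv := hA.mulVec_eigenvectorBasisFun i
    hA.eq_of_mulVec_eq_smul hdist (C.mulVec_toFun_mulVec_eq_smul h hv)
      (C.mulVec_conjTranspose_mulVec_toFun_eq_smul h hv) (C.star_dotProduct_toFun_mulVec T _ _)
  have hCT : C.toStarLinearMap ∘ₛₗ T.mulVecLin = Tᴴ.mulVecLin ∘ₛₗ C.toStarLinearMap :=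
    hA.eigenvectorBasisFun.ext hbasis
  intro x
  calc T *ᵥ x = C.toFun (C.toFun (T *ᵥ x)) := (C.involutive _).symm
    _ = C.toFun (Tᴴ *ᵥ C.toFun x) := congrArg C.toFun (LinearMap.congr_fun hCT x)
end

section
/- There exists a unitary matrix T ∈ Mₙ(ℂ) (for some n) and a conjugation C with T*T = C(TT*)C but T ≠ C T* C; for example any unitary T that is not complex symmetric with C = J the canonical conjugation. Hence the hypothesis of distinct singular values in the previous implication cannot be dropped. -/
open scoped ComplexConjugate
open Matrix

theorem exists_unitary_counterexample :
    ∃ (n : ℕ) (T : Matrix (Fin n) (Fin n) ℂ) (C : Conjugation n),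
      T ∈ Matrix.unitaryGroup (Fin n) ℂ ∧
      (∀ x : Fin n → ℂ, (Tᴴ * T).mulVec x = C.toFun ((T * Tᴴ).mulVec (C.toFun x))) ∧
      ¬ (∀ x : Fin n → ℂ, T.mulVec x = C.toFun (Tᴴ.mulVec (C.toFun x))) := by
  refine ⟨2, !![0, 1; -1, 0], ⟨fun x i => conj (x i), ?_, ?_, ?_, ?_⟩, ?_, ?_, ?_⟩
  · intro x y; funext i; simp
  · intro a x; funext i; simp [mul_comm]
  · intro x y; simp [cinner, mul_comm]
  · intro x; funext i; simp
  · constructor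
    · ext i j
      fin_cases i <;> fin_cases j <;>
        simp [Matrix.mul_apply, Fin.sum_univ_two, Matrix.conjTranspose_apply]
    · ext i j
      fin_cases i <;> fin_cases j <;>
        simp [Matrix.mul_apply, Fin.sum_univ_two, Matrix.conjTranspose_apply]
  · intro x
    funext i
    fin_cases i <;>
      simp [Matrix.mulVec, dotProduct, Fin.sum_univ_two, Matrix.mul_apply,
        Matrix.conjTranspose_apply, mul_comm]
  · intro h
    have := congrFun (h (Pi.single 0 1)) 1
    simp [Matrix.mulVec, dotProduct, Fin.sum_univ_two,
      Matrix.conjTranspose_apply, Pi.single] at this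
    exact absurd this (by norm_num)
end

section
/- Let T ∈ Mₙ(ℂ) have distinct singular values, let u₁,…,uₙ be unit eigenvectors of T*T with eigenvalues λ₁,…,λₙ, and v₁,…,vₙ unit eigenvectors of TT* with the same eigenvalues. If C is a conjugation on ℂⁿ, then T*T = C(TT*)C if and only if there exist unimodular constants α₁,…,αₙ with C uᵢ = αᵢ vᵢ for all i. -/
open scoped ComplexConjugate
open Matrix

/-!
`Tᴴ T` and `T Tᴴ` are Hermitian with simple spectrum, so the `uᵢ` and the `vᵢ` are orthonormal
bases and every eigenspace is a line. If `Tᴴ T = C (T Tᴴ) C`, then `C uᵢ` is a `λᵢ`-eigenvector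
of `T Tᴴ`, hence a multiple of `vᵢ`, with unimodular coefficient because `C` is isometric.
Conversely, if `C uᵢ = αᵢ vᵢ`, the linear maps `Tᴴ T` and `C (T Tᴴ) C` agree on the basis `uᵢ`:
as `λᵢ` is real, `C (T Tᴴ) C uᵢ = C (λᵢ αᵢ vᵢ) = λᵢ C (C uᵢ) = λᵢ uᵢ`.
-/

section Cinner

variable {n : ℕ}

lemma cinner_smul_left (a : ℂ) (x y : Fin n → ℂ) : cinner (a • x) y = a * cinner x y := by
  simp [cinner, Finset.mul_sum, mul_assoc]

lemma cinner_smul_right (a : ℂ) (x y : Fin n → ℂ) : cinner x (a • y) = conj a * cinner x y := by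
  simp only [cinner, Pi.smul_apply, smul_eq_mul, map_mul, Finset.mul_sum]
  exact Finset.sum_congr rfl fun i _ => by ring

lemma cinner_sum_left {ι : Type*} (s : Finset ι) (f : ι → Fin n → ℂ) (y : Fin n → ℂ) :
    cinner (∑ i ∈ s, f i) y = ∑ i ∈ s, cinner (f i) y := by
  simp only [cinner, Finset.sum_apply, Finset.sum_mul]
  exact Finset.sum_comm

lemma cinner_mulVec_left (A : Matrix (Fin n) (Fin n) ℂ) (x y : Fin n → ℂ) :
    cinner (A *ᵥ x) y = cinner x (Aᴴ *ᵥ y) := by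
  simp only [cinner, mulVec, dotProduct, conjTranspose_apply, map_sum, map_mul,
    Complex.star_def, Complex.conj_conj, Finset.sum_mul, Finset.mul_sum]
  rw [Finset.sum_comm]
  exact Finset.sum_congr rfl fun i _ => Finset.sum_congr rfl fun j _ => by ring

lemma cinner_smul_self (a : ℂ) (x : Fin n → ℂ) :
    cinner (a • x) (a • x) = ((‖a‖ ^ 2 : ℝ) : ℂ) * cinner x x := by
  rw [cinner_smul_left, cinner_smul_right, ← mul_assoc, Complex.mul_conj,
    Complex.normSq_eq_norm_sq]

end Cinner

def CinnerOrthonormal {n : ℕ} {ι : Type*} [DecidableEq ι] (w : ι → Fin n → ℂ) : Prop :=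
  ∀ i j, cinner (w i) (w j) = if i = j then 1 else 0

namespace Matrix.IsHermitian

variable {n : ℕ} {A : Matrix (Fin n) (Fin n) ℂ}

lemma cinner_eq_zero_of_eigenvalue_ne (hA : A.IsHermitian) {μ ν : ℝ} (hμν : μ ≠ ν)
    {x y : Fin n → ℂ} (hx : A *ᵥ x = (μ : ℂ) • x) (hy : A *ᵥ y = (ν : ℂ) • y) :
    cinner x y = 0 := by
  have h : cinner (A *ᵥ x) y = cinner x (A *ᵥ y) := by rw [cinner_mulVec_left, hA.eq]
  rw [hx, hy, cinner_smul_left, cinner_smul_right, Complex.conj_ofReal] at h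
  have hμν' : (μ : ℂ) - ν ≠ 0 := sub_ne_zero.mpr (by exact_mod_cast hμν)
  exact (mul_eq_zero.mp (by rw [sub_mul, h, sub_self])).resolve_left hμν'

lemma cinnerOrthonormal_of_eigenvectors (hA : A.IsHermitian) {ι : Type*} [DecidableEq ι]
    {lam : ι → ℝ} (hdist : Function.Injective lam) {w : ι → Fin n → ℂ}
    (hw : ∀ i, A *ᵥ w i = (lam i : ℂ) • w i) (hw1 : ∀ i, cinner (w i) (w i) = 1) :
    CinnerOrthonormal w := by
  intro i j
  split_ifs with hij
  · rw [hij, hw1]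
  · exact hA.cinner_eq_zero_of_eigenvalue_ne (hdist.ne hij) (hw i) (hw j)

end Matrix.IsHermitian

namespace CinnerOrthonormal

variable {n : ℕ} {w : Fin n → Fin n → ℂ}

lemma cinner_sum_smul (hw : CinnerOrthonormal w) (c : Fin n → ℂ) (j : Fin n) :
    cinner (∑ i, c i • w i) (w j) = c j := by
  simp [cinner_sum_left, cinner_smul_left, hw _ j]

lemma linearIndependent (hw : CinnerOrthonormal w) : LinearIndependent ℂ w :=
  Fintype.linearIndependent_iff.mpr fun c hc j => by
    have h := hw.cinner_sum_smul c j
    rw [hc] at h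
    simpa [cinner] using h.symm

lemma span_eq_top (hw : CinnerOrthonormal w) : Submodule.span ℂ (Set.range w) = ⊤ :=
  hw.linearIndependent.span_eq_top_of_card_eq_finrank' (by simp)

lemma sum_cinner_smul (hw : CinnerOrthonormal w) (x : Fin n → ℂ) :
    ∑ i, cinner x (w i) • w i = x := by
  obtain ⟨c, rfl⟩ :=
    (Submodule.mem_span_range_iff_exists_fun ℂ).mp (hw.span_eq_top ▸ Submodule.mem_top (x := x))
  simp only [hw.cinner_sum_smul]

lemma eq_cinner_smul_of_mulVec_eq (hw : CinnerOrthonormal w) {A : Matrix (Fin n) (Fin n) ℂ}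
    (hA : A.IsHermitian) {lam : Fin n → ℝ} (hdist : Function.Injective lam)
    (hAw : ∀ i, A *ᵥ w i = (lam i : ℂ) • w i) {i : Fin n} {y : Fin n → ℂ}
    (hy : A *ᵥ y = (lam i : ℂ) • y) : y = cinner y (w i) • w i := by
  conv_lhs => rw [← hw.sum_cinner_smul y]
  refine Finset.sum_eq_single i (fun j _ hji => ?_) (by simp)
  rw [hA.cinner_eq_zero_of_eigenvalue_ne (hdist.ne hji.symm) hy (hAw j), zero_smul]

end CinnerOrthonormal

namespace Conjugation

variable {n : ℕ} (C : Conjugation n)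

lemma map_ofReal_smul (r : ℝ) (x : Fin n → ℂ) : C.toFun ((r : ℂ) • x) = (r : ℂ) • C.toFun x := by
  rw [C.map_smul, Complex.conj_ofReal]

def conjugate (f : (Fin n → ℂ) →ₗ[ℂ] (Fin n → ℂ)) : (Fin n → ℂ) →ₗ[ℂ] (Fin n → ℂ) where
  toFun x := C.toFun (f (C.toFun x))
  map_add' x y := by rw [C.map_add, f.map_add, C.map_add]
  map_smul' a x := by rw [C.map_smul, f.map_smul, C.map_smul, Complex.conj_conj, RingHom.id_apply]

lemma conjugate_apply (f : (Fin n → ℂ) →ₗ[ℂ] (Fin n → ℂ)) (x : Fin n → ℂ) :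
    C.conjugate f x = C.toFun (f (C.toFun x)) := rfl

end Conjugation

theorem conj_intertwines_iff_unimodular {n : ℕ} (T : Matrix (Fin n) (Fin n) ℂ)
    (C : Conjugation n) (lam : Fin n → ℝ) (u v : Fin n → (Fin n → ℂ))
    (hdist : Function.Injective lam)
    (hu : ∀ i, (Tᴴ * T).mulVec (u i) = (lam i : ℂ) • u i)
    (hu1 : ∀ i, cinner (u i) (u i) = 1)
    (hv : ∀ i, (T * Tᴴ).mulVec (v i) = (lam i : ℂ) • v i)
    (hv1 : ∀ i, cinner (v i) (v i) = 1) :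
    (∀ x : Fin n → ℂ, (Tᴴ * T).mulVec x = C.toFun ((T * Tᴴ).mulVec (C.toFun x))) ↔
      ∃ α : Fin n → ℂ, (∀ i, ‖α i‖ = 1) ∧
        ∀ i, C.toFun (u i) = α i • v i := by
  have hA : (Tᴴ * T).IsHermitian := isHermitian_conjTranspose_mul_self T
  have hB : (T * Tᴴ).IsHermitian := isHermitian_mul_conjTranspose_self T
  have hu_on := hA.cinnerOrthonormal_of_eigenvectors hdist hu hu1
  have hv_on := hB.cinnerOrthonormal_of_eigenvectors hdist hv hv1
  constructor
  · intro h
    have hCu : ∀ i, (T * Tᴴ) *ᵥ C.toFun (u i) = (lam i : ℂ) • C.toFun (u i) := fun i => by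
      rw [← C.involutive ((T * Tᴴ) *ᵥ _), ← h, hu, C.map_ofReal_smul]
    have hCu_eq i := hv_on.eq_cinner_smul_of_mulVec_eq hB hdist hv (hCu i)
    refine ⟨fun i => cinner (C.toFun (u i)) (v i), fun i => ?_, hCu_eq⟩
    have h1 := C.isometric (u i) (u i)
    rw [hu1, hCu_eq i, cinner_smul_self, hv1, mul_one] at h1
    have h2 : ‖cinner (C.toFun (u i)) (v i)‖ ^ 2 = 1 := by exact_mod_cast h1
    exact (pow_eq_one_iff_of_nonneg (norm_nonneg _) two_ne_zero).mp h2
  · rintro ⟨α, -, hCu⟩ x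
    have hmaps : toLin' (Tᴴ * T) = C.conjugate (toLin' (T * Tᴴ)) :=
      LinearMap.ext_on_range hu_on.span_eq_top fun i => by
        rw [toLin'_apply, hu, C.conjugate_apply, toLin'_apply, hCu, mulVec_smul, hv,
          smul_comm (α i), C.map_ofReal_smul, ← hCu, C.involutive]
    exact LinearMap.congr_fun hmaps x
end

section
/- Every 2×2 complex matrix is unitarily equivalent to a complex symmetric matrix. -/
open scoped ComplexConjugate
open Matrix

/-! A real rotation `R` by `θ` fixes the antisymmetric part of `T` and turns the off-diagonal
entry of its symmetric part through the angle `2θ`. So for a suitable `θ` the off-diagonal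
entries `x, y` of `Rᴴ T R` satisfy `|x|² - |y|² = Re ((x + y) * conj (x - y)) = 0`. Once
`|x| = |y|`, conjugating by `diag (1, ω)` with `ω` of modulus one replaces `x, y` by `x ω` and
`conj ω y`, and `ω` can be chosen to make these equal. -/

namespace Complex

lemma norm_eq_norm_of_re_add_mul_conj_sub_eq_zero {u v : ℂ}
    (h : ((u + v) * conj (u - v)).re = 0) : ‖u‖ = ‖v‖ := by
  have hsq : ‖u‖ ^ 2 = ‖v‖ ^ 2 := by
    simp only [← normSq_eq_norm_sq, normSq_apply]
    simp only [mul_re, add_re, add_im, conj_re, conj_im, sub_re, sub_im] at h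
    linarith
  exact (pow_left_inj₀ (norm_nonneg u) (norm_nonneg v) two_ne_zero).1 hsq

lemma exists_norm_eq_one_mul_eq_conj_mul {x y : ℂ} (h : ‖x‖ = ‖y‖) :
    ∃ ω : ℂ, ‖ω‖ = 1 ∧ x * ω = conj ω * y := by
  refine ⟨exp (((arg y - arg x) / 2 : ℝ) * I), norm_exp_ofReal_mul_I _, ?_⟩
  have hx := norm_mul_exp_arg_mul_I x
  have hy := norm_mul_exp_arg_mul_I y
  set a := arg x
  set b := arg y
  rw [← exp_conj, ← hx, ← hy, h]
  simp only [map_mul, conj_ofReal, conj_I, mul_assoc, ← exp_add]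
  rw [mul_left_comm, ← exp_add]
  congr 2
  push_cast
  ring

end Complex

namespace Real

lemma exists_mul_cos_add_mul_sin_eq_zero (A B : ℝ) : ∃ φ : ℝ, A * cos φ + B * sin φ = 0 := by
  by_cases hAB : A = 0 ∧ B = 0
  · exact ⟨0, by simp [hAB.1]⟩
  set z : ℂ := ⟨B, -A⟩
  have hz : z ≠ 0 := fun h => hAB ⟨by simpa [z] using congrArg Complex.im h,
    by simpa [z] using congrArg Complex.re h⟩
  refine ⟨z.arg, (mul_eq_zero.1 ?_).resolve_left (norm_ne_zero_iff.2 hz)⟩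
  linear_combination A * Complex.norm_mul_cos_arg z + B * Complex.norm_mul_sin_arg z

end Real

open Real in
noncomputable def rotationMatrix (θ : ℝ) : Matrix (Fin 2) (Fin 2) ℂ :=
  !![(cos θ : ℂ), -(sin θ : ℂ); (sin θ : ℂ), (cos θ : ℂ)]

lemma rotationMatrix_mem_unitaryGroup (θ : ℝ) : rotationMatrix θ ∈ unitaryGroup (Fin 2) ℂ := by
  have h : (Real.cos θ : ℂ) ^ 2 + (Real.sin θ : ℂ) ^ 2 = 1 := mod_cast Real.cos_sq_add_sin_sq θ
  rw [mem_unitaryGroup_iff']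
  ext i j
  -- keeping `cos θ`, `sin θ` as casts of reals lets `conj` fix them
  fin_cases i <;> fin_cases j <;>
    simp [rotationMatrix, mul_apply, Fin.sum_univ_two, -Complex.ofReal_cos, -Complex.ofReal_sin] <;>
    first | linear_combination h | ring

section rotationMatrix
variable (T : Matrix (Fin 2) (Fin 2) ℂ) (θ : ℝ)

lemma rotationMatrix_conj_apply_zero_one_add_apply_one_zero :
    ((rotationMatrix θ)ᴴ * T * rotationMatrix θ) 0 1 +
        ((rotationMatrix θ)ᴴ * T * rotationMatrix θ) 1 0 =
      (T 0 1 + T 1 0) * Real.cos (2 * θ) + (T 1 1 - T 0 0) * Real.sin (2 * θ) := by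
  simp [rotationMatrix, mul_apply, Fin.sum_univ_two, Real.cos_two_mul', Real.sin_two_mul,
    -Complex.ofReal_cos, -Complex.ofReal_sin]
  ring

lemma rotationMatrix_conj_apply_zero_one_sub_apply_one_zero :
    ((rotationMatrix θ)ᴴ * T * rotationMatrix θ) 0 1 -
        ((rotationMatrix θ)ᴴ * T * rotationMatrix θ) 1 0 = T 0 1 - T 1 0 := by
  have h : (Real.cos θ : ℂ) ^ 2 + (Real.sin θ : ℂ) ^ 2 = 1 := mod_cast Real.cos_sq_add_sin_sq θ
  simp [rotationMatrix, mul_apply, Fin.sum_univ_two, -Complex.ofReal_cos, -Complex.ofReal_sin]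
  linear_combination (T 0 1 - T 1 0) * h

end rotationMatrix

lemma exists_norm_rotationMatrix_conj_apply_zero_one_eq (T : Matrix (Fin 2) (Fin 2) ℂ) :
    ∃ θ : ℝ, ‖((rotationMatrix θ)ᴴ * T * rotationMatrix θ) 0 1‖ =
      ‖((rotationMatrix θ)ᴴ * T * rotationMatrix θ) 1 0‖ := by
  obtain ⟨φ, hφ⟩ := Real.exists_mul_cos_add_mul_sin_eq_zero
    ((T 0 1 + T 1 0) * conj (T 0 1 - T 1 0)).re ((T 1 1 - T 0 0) * conj (T 0 1 - T 1 0)).re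
  refine ⟨φ / 2, Complex.norm_eq_norm_of_re_add_mul_conj_sub_eq_zero ?_⟩
  rw [rotationMatrix_conj_apply_zero_one_add_apply_one_zero,
    rotationMatrix_conj_apply_zero_one_sub_apply_one_zero, mul_div_cancel₀ φ two_ne_zero, add_mul,
    mul_right_comm, mul_right_comm (T 1 1 - T 0 0)]
  simpa only [Complex.add_re, Complex.re_mul_ofReal] using hφ

lemma UECSM.of_conjTranspose_mul_mul {n : ℕ} {T U : Matrix (Fin n) (Fin n) ℂ}
    (hU : U ∈ unitaryGroup (Fin n) ℂ) (h : UECSM (Uᴴ * T * U)) : UECSM T := by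
  obtain ⟨Q, hQ, hsymm⟩ := h
  exact ⟨U * Q, Submonoid.mul_mem _ hU hQ, by simpa [conjTranspose_mul, mul_assoc] using hsymm⟩

lemma UECSM.of_norm_apply_zero_one_eq {M : Matrix (Fin 2) (Fin 2) ℂ} (h : ‖M 0 1‖ = ‖M 1 0‖) :
    UECSM M := by
  obtain ⟨ω, hω, hsymm⟩ := Complex.exists_norm_eq_one_mul_eq_conj_mul h
  refine ⟨diagonal ![1, ω], ?_, ?_⟩
  · rw [mem_unitaryGroup_iff']
    ext i j
    fin_cases i <;> fin_cases j <;> simp [Complex.conj_mul', hω]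
  · ext i j
    fin_cases i <;> fin_cases j <;> simp [mul_apply, Fin.sum_univ_two, hsymm]

theorem two_by_two_uecsm (T : Matrix (Fin 2) (Fin 2) ℂ) : UECSM T := by
  obtain ⟨θ, hθ⟩ := exists_norm_rotationMatrix_conj_apply_zero_one_eq T
  exact (UECSM.of_norm_apply_zero_one_eq hθ).of_conjTranspose_mul_mul
    (rotationMatrix_mem_unitaryGroup θ)
end

section
/- For a ≥ 0, the matrix T = [[1, a],[0, 0]] is unitarily equivalent to the complex symmetric matrix [[(1 − √(1+a²))/2, ia/2],[ia/2, (1 + √(1+a²))/2]]. -/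
open scoped ComplexConjugate
open Matrix

/-! Conjugating `!![1, a; 0, 0]` by `Q = !![-β, -iα; α, -iβ]` with `α² + β² = 1` makes both
off-diagonal entries `ia/2` and the diagonal `(1 ∓ s)/2`, `s = √(1 + a²)`, as soon as `(α, β)` is
the unit vector along `(1 + s, a)`; its length is `√(2s(1 + s))` since `s² = 1 + a²`. -/

open Complex

/-- The product of the real reflection `!![-β, α; α, β]` and `diagonal ![1, -i]`. -/
noncomputable def twistedReflection (α β : ℝ) : Matrix (Fin 2) (Fin 2) ℂ :=
  !![-β, -I * α; α, -I * β]

lemma twistedReflection_mem_unitaryGroup {α β : ℝ} (h : α ^ 2 + β ^ 2 = 1) :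
    twistedReflection α β ∈ unitaryGroup (Fin 2) ℂ := by
  rw [mem_unitaryGroup_iff]
  have h' : (α : ℂ) ^ 2 + β ^ 2 = 1 := by exact_mod_cast h
  ext i j
  fin_cases i <;> fin_cases j <;>
    simp [twistedReflection, mul_apply, Fin.sum_univ_two, ← mul_assoc, mul_comm _ I, ← sq]
  · linear_combination h'
  · ring
  · ring
  · linear_combination h'

lemma twistedReflection_conjTranspose_mul_mul (a α β : ℝ) :
    (twistedReflection α β)ᴴ * !![(1 : ℂ), (a : ℂ); 0, 0] * twistedReflection α β =
      !![((β ^ 2 - a * α * β : ℝ) : ℂ), I * (β * (α + a * β) : ℝ);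
         I * (α * (a * α - β) : ℝ), ((α ^ 2 + a * α * β : ℝ) : ℂ)] := by
  ext i j
  fin_cases i <;> fin_cases j <;> simp [twistedReflection, mul_apply, Fin.sum_univ_two]
  · ring
  · ring
  · ring
  · linear_combination (-(α ^ 2 + a * α * β : ℂ)) * I_sq

theorem example_2x2_explicit_general (a : ℝ) :
    ∃ Q ∈ Matrix.unitaryGroup (Fin 2) ℂ,
      Qᴴ * !![(1 : ℂ), (a : ℂ); 0, 0] * Q =
        !![(((1 - Real.sqrt (1 + a ^ 2)) / 2 : ℝ) : ℂ), Complex.I * (a : ℂ) / 2;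
           Complex.I * (a : ℂ) / 2, (((1 + Real.sqrt (1 + a ^ 2)) / 2 : ℝ) : ℂ)] := by
  set s := Real.sqrt (1 + a ^ 2)
  have hs : s ^ 2 = 1 + a ^ 2 := Real.sq_sqrt (by positivity)
  set N := Real.sqrt (2 * s * (1 + s))
  have hN : N ^ 2 = 2 * s * (1 + s) := Real.sq_sqrt (by positivity)
  have hN0 : N ≠ 0 := by positivity
  refine ⟨_, twistedReflection_mem_unitaryGroup (α := (1 + s) / N) (β := a / N) ?_, ?_⟩
  · field_simp
    linear_combination -hs - hN
  have h00 : (a / N) ^ 2 - a * ((1 + s) / N) * (a / N) = (1 - s) / 2 := by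
    field_simp
    linear_combination (s - 1) * hN + 2 * s * hs
  have h01 : a / N * ((1 + s) / N + a * (a / N)) = a / 2 := by
    field_simp
    linear_combination -a * hN - 2 * a * hs
  have h10 : (1 + s) / N * (a * ((1 + s) / N) - a / N) = a / 2 := by
    field_simp
    linear_combination -a * hN
  have h11 : ((1 + s) / N) ^ 2 + a * ((1 + s) / N) * (a / N) = (1 + s) / 2 := by
    field_simp
    linear_combination (1 + s) * (-hN - 2 * hs)
  rw [twistedReflection_conjTranspose_mul_mul, h00, h01, h10, h11]
  push_cast
  simp [mul_div_assoc]

theorem example_2x2_explicit (a : ℝ) (ha : 0 ≤ a) :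
    ∃ Q ∈ Matrix.unitaryGroup (Fin 2) ℂ,
      Qᴴ * !![(1 : ℂ), (a : ℂ); 0, 0] * Q =
        !![(((1 - Real.sqrt (1 + a ^ 2)) / 2 : ℝ) : ℂ), Complex.I * (a : ℂ) / 2;
           Complex.I * (a : ℂ) / 2, (((1 + Real.sqrt (1 + a ^ 2)) / 2 : ℝ) : ℂ)] :=
  example_2x2_explicit_general a
end

section
/- If a, b ∈ ℂ satisfy ab ≠ 0 and |a| ≠ |b|, then the 3×3 nilpotent matrix T with T₁₂ = a, T₂₃ = b and all other entries zero is not unitarily equivalent to any complex symmetric matrix. -/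
open scoped ComplexConjugate
open Matrix

/-!
If `S = Qᴴ T Q` is symmetric with `Q` unitary, then `Sᴴ = conj S`, so `(S Sᴴ)ᵀ = Sᴴ S`; transporting
back, the symmetric unitary `W = Q Qᵀ` intertwines `TᴴT` with `(TTᴴ)ᵀ`. For the weighted shift `T`
these are `diag(0, |a|², |b|²)` and `diag(|a|², |b|², 0)`. Since `0`, `|a|²`, `|b|²` are distinct,
the intertwining forces `W₀₀ = W₀₁ = W₂₀ = 0`, and symmetry gives `W₀₂ = 0`: the first row of the
unitary `W` vanishes, which is absurd.
-/

namespace Matrix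

variable {n α : Type*} [Fintype n] [DecidableEq n]

theorem transpose_mem_unitaryGroup [CommRing α] [StarRing α] {Q : Matrix n n α}
    (hQ : Q ∈ unitaryGroup n α) : Qᵀ ∈ unitaryGroup n α := by
  rw [mem_unitaryGroup_iff, star_eq_conjTranspose, transpose_conjTranspose,
    ← conjTranspose_transpose, ← transpose_mul, ← star_eq_conjTranspose,
    mem_unitaryGroup_iff'.mp hQ, transpose_one]

theorem exists_apply_ne_zero_of_mem_unitaryGroup [CommRing α] [StarRing α] [Nontrivial α]
    {W : Matrix n n α} (hW : W ∈ unitaryGroup n α) (i : n) : ∃ j, W i j ≠ 0 := by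
  by_contra! hrow
  have h := congr_fun (congr_fun (mem_unitaryGroup_iff.mp hW) i) i
  simp [mul_apply, hrow] at h

theorem apply_eq_zero_of_diagonal_mul_eq_mul_diagonal [CommRing α] [NoZeroDivisors α]
    {d e : n → α} {W : Matrix n n α} (h : diagonal d * W = W * diagonal e) {i j : n}
    (hij : d i ≠ e j) : W i j = 0 := by
  have hij' := congr_fun (congr_fun h i) j
  rw [diagonal_mul, mul_diagonal, mul_comm (W i j)] at hij'
  exact (mul_eq_mul_right_iff.mp hij').resolve_left hij

end Matrix

theorem UECSM.exists_symm_unitary_intertwining {n : ℕ} {T : Matrix (Fin n) (Fin n) ℂ}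
    (hT : UECSM T) :
    ∃ W ∈ unitaryGroup (Fin n) ℂ, Wᵀ = W ∧ Tᴴ * T * W = W * (T * Tᴴ)ᵀ := by
  obtain ⟨Q, hQ, hS⟩ := hT
  set S := Qᴴ * T * Q
  have hQQ : Q * Qᴴ = 1 := mem_unitaryGroup_iff.mp hQ
  have hT : T = Q * S * Qᴴ := by
    simp only [S, ← mul_assoc, hQQ, one_mul]
    rw [mul_assoc, hQQ, mul_one]
  have hSH : Sᴴᵀ = Sᴴ := by rw [conjTranspose_transpose, ← transpose_conjTranspose, hS]
  have cancel : ∀ X, Qᴴ * (Q * X) = X := fun X => by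
    rw [← mul_assoc, ← star_eq_conjTranspose, mem_unitaryGroup_iff'.mp hQ, one_mul]
  have cancel' : ∀ X, Qᵀ * (Qᴴᵀ * X) = X := fun X => by
    rw [← mul_assoc, ← transpose_mul, ← star_eq_conjTranspose, mem_unitaryGroup_iff'.mp hQ,
      transpose_one, one_mul]
  refine ⟨Q * Qᵀ, mul_mem hQ (transpose_mem_unitaryGroup hQ),
    by rw [transpose_mul, transpose_transpose], ?_⟩
  rw [hT]
  simp only [conjTranspose_mul, conjTranspose_conjTranspose, transpose_mul, hSH, hS, mul_assoc,
    cancel, cancel']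

theorem conjTranspose_shift (a b : ℂ) :
    (!![0, a, 0; 0, 0, b; 0, 0, 0])ᴴ = !![0, 0, 0; conj a, 0, 0; 0, conj b, 0] := by
  ext i j
  fin_cases i <;> fin_cases j <;> simp

theorem conjTranspose_shift_mul_self (a b : ℂ) :
    (!![0, a, 0; 0, 0, b; 0, 0, 0])ᴴ * !![0, a, 0; 0, 0, b; 0, 0, 0] =
      diagonal ![0, (‖a‖ ^ 2 : ℂ), ‖b‖ ^ 2] := by
  rw [conjTranspose_shift, mul_fin_three, diagonal_fin_three]
  simp [Complex.conj_mul']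

theorem shift_mul_conjTranspose_self (a b : ℂ) :
    !![0, a, 0; 0, 0, b; 0, 0, 0] * (!![0, a, 0; 0, 0, b; 0, 0, 0])ᴴ =
      diagonal ![(‖a‖ ^ 2 : ℂ), ‖b‖ ^ 2, 0] := by
  rw [conjTranspose_shift, mul_fin_three, diagonal_fin_three]
  simp [Complex.mul_conj']

theorem nilpotent_not_uecsm (a b : ℂ) (hab : a * b ≠ 0)
    (habs : ‖a‖ ≠ ‖b‖) :
    ¬ UECSM !![(0 : ℂ), a, 0; 0, 0, b; 0, 0, 0] := by
  intro hT
  obtain ⟨W, hW, hW_symm, hW_int⟩ := hT.exists_symm_unitary_intertwining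
  rw [conjTranspose_shift_mul_self, shift_mul_conjTranspose_self, diagonal_transpose] at hW_int
  have ha : (‖a‖ ^ 2 : ℂ) ≠ 0 := by simpa using left_ne_zero_of_mul hab
  have hb : (‖b‖ ^ 2 : ℂ) ≠ 0 := by simpa using right_ne_zero_of_mul hab
  have hba : (‖b‖ ^ 2 : ℂ) ≠ ‖a‖ ^ 2 := by
    exact_mod_cast (pow_left_inj₀ (norm_nonneg b) (norm_nonneg a) two_ne_zero).not.mpr habs.symm
  have h00 : W 0 0 = 0 :=
    apply_eq_zero_of_diagonal_mul_eq_mul_diagonal hW_int (by simpa using ha.symm)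
  have h01 : W 0 1 = 0 :=
    apply_eq_zero_of_diagonal_mul_eq_mul_diagonal hW_int (by simpa using hb.symm)
  have h02 : W 0 2 = 0 := by
    rw [← hW_symm, transpose_apply]
    exact apply_eq_zero_of_diagonal_mul_eq_mul_diagonal hW_int (by simpa using hba)
  obtain ⟨j, hj⟩ := exists_apply_ne_zero_of_mem_unitaryGroup hW 0
  fin_cases j
  exacts [hj h00, hj h01, hj h02]
end

section
/- The matrix T = [[0,0,0],[1,2,0],[1,0,2]] is unitarily equivalent to a complex symmetric matrix. -/
open scoped ComplexConjugate
open Matrix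

/-!
`T - 2 • 1 = vecMulVec u e₀` with `u = (-2, 1, 1)` has rank one, and adding a scalar matrix
preserves being UECSM. For a rank-one matrix `vecMulVec u w`, conjugating by a unitary `Q`
gives `vecMulVec (Qᴴ *ᵥ u) (w ᵥ* Q)`, which is symmetric as soon as `Qᴴ *ᵥ u` is a multiple
of `w ᵥ* Q`.
The factor then has modulus `‖u‖ / ‖w‖ = √6`; with the factor `-√6` the conjugate-linear
condition on the columns of `Q` admits a solution with entries in `ℚ(i, √6)`.
-/

open Complex

theorem UECSM.add_smul_one {n : ℕ} {T : Matrix (Fin n) (Fin n) ℂ} (hT : UECSM T) (c : ℂ) :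
    UECSM (T + c • 1) := by
  obtain ⟨Q, hQ, hsymm⟩ := hT
  have hQQ : Qᴴ * Q = 1 := mem_unitaryGroup_iff'.mp hQ
  refine ⟨Q, hQ, ?_⟩
  rw [Matrix.mul_add, Matrix.add_mul, Matrix.mul_smul, Matrix.smul_mul, Matrix.mul_one, hQQ,
    transpose_add, hsymm, transpose_smul, transpose_one]

theorem uecsm_vecMulVec {n : ℕ} {u w : Fin n → ℂ} {Q : Matrix (Fin n) (Fin n) ℂ}
    (hQ : Q ∈ unitaryGroup (Fin n) ℂ) {c : ℂ} (h : Qᴴ *ᵥ u = c • (w ᵥ* Q)) :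
    UECSM (vecMulVec u w) :=
  ⟨Q, hQ, by rw [mul_vecMulVec, vecMulVec_mul, h, transpose_vecMulVec, vecMulVec_smul,
    smul_vecMulVec]⟩

noncomputable def symmetrizingUnitary (r : ℝ) : Matrix (Fin 3) (Fin 3) ℂ :=
  !![(1 + I) / 2 + 2 * ((1 - I) * r / 12), -((1 - I) * r / 12), -((1 - I) * r / 12);
    -((1 - I) * r / 12), (3 + I) / 4 - (1 - I) * r / 12, (-1 + I) / 4 - (1 - I) * r / 12;
    -((1 - I) * r / 12), (-1 + I) / 4 - (1 - I) * r / 12, (3 + I) / 4 - (1 - I) * r / 12]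

theorem symmetrizingUnitary_mem_unitaryGroup {r : ℝ} (hr : r ^ 2 = 6) :
    symmetrizingUnitary r ∈ unitaryGroup (Fin 3) ℂ := by
  have hr' : (r : ℂ) ^ 2 = 6 := by exact_mod_cast hr
  rw [mem_unitaryGroup_iff']
  ext i j
  fin_cases i <;> fin_cases j <;>
    simp [symmetrizingUnitary, mul_apply, Fin.sum_univ_three, conj_ofReal, conj_ofNat,
      map_div₀] <;>
    ring_nf <;> simp only [I_sq, hr'] <;> ring_nf

theorem symmetrizingUnitary_conjTranspose_mulVec {r : ℝ} (hr : r ^ 2 = 6) :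
    (symmetrizingUnitary r)ᴴ *ᵥ ![-2, 1, 1] =
      (-r : ℂ) • (![1, 0, 0] ᵥ* symmetrizingUnitary r) := by
  have hr' : (r : ℂ) ^ 2 = 6 := by exact_mod_cast hr
  ext i
  fin_cases i <;>
    simp [symmetrizingUnitary, mulVec, dotProduct, Fin.sum_univ_three, conj_ofReal, conj_ofNat,
      map_div₀] <;>
    ring_nf <;> simp only [hr'] <;> ring_nf

theorem example_3x3_eq_vecMulVec_add_smul_one :
    !![(0 : ℂ), 0, 0; 1, 2, 0; 1, 0, 2] = vecMulVec ![-2, 1, 1] ![1, 0, 0] + (2 : ℂ) • 1 := by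
  ext i j
  fin_cases i <;> fin_cases j <;> simp [vecMulVec]

theorem example_3x3_uecsm : UECSM !![(0 : ℂ), 0, 0; 1, 2, 0; 1, 0, 2] := by
  have hr : √6 ^ 2 = 6 := Real.sq_sqrt (by norm_num)
  rw [example_3x3_eq_vecMulVec_add_smul_one]
  exact (uecsm_vecMulVec (symmetrizingUnitary_mem_unitaryGroup hr)
    (symmetrizingUnitary_conjTranspose_mulVec hr)).add_smul_one 2
end

section
/- Every rank-one matrix T ∈ Mₙ(ℂ) is unitarily equivalent to a complex symmetric matrix. -/
open scoped ComplexConjugate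
open Matrix

/-!
Write `T = x y*`. After multiplying `x` and `y` by suitable nonzero scalars we may assume
`‖x‖ = ‖y‖` and `⟪x, y⟫ ∈ ℝ`. Then `x + y ⟂ I • (x - y)`, and in an orthonormal basis `b` in
which both of these vectors have real coordinates (Gram–Schmidt started from them) we get
`⟪b i, x⟫ = conj ⟪b i, y⟫`. If `Q` is the unitary with columns `b i`, this says
`Qᴴ T Q = a aᵀ` with `a = Qᴴ x`.
-/

open scoped InnerProductSpace
open InnerProductSpace Module

namespace Matrix

theorem exists_eq_vecMulVec_of_rank_le_one {m n K : Type*} [Fintype n] [Field K]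
    (A : Matrix m n K) (hA : A.rank ≤ 1) : ∃ w : m → K, ∃ v : n → K, A = vecMulVec w v := by
  classical
  obtain ⟨⟨w, _⟩, hw⟩ := finrank_le_one_iff.mp hA
  have hcol (j : n) : ∃ c : K, c • w = A.col j := by
    obtain ⟨c, hc⟩ := hw ⟨A.col j, Pi.single j 1, A.mulVec_single_one j⟩
    exact ⟨c, congrArg Subtype.val hc⟩
  choose c hc using hcol
  refine ⟨w, c, ?_⟩
  ext i j
  rw [vecMulVec_apply, ← col_apply A j i, ← hc j, Pi.smul_apply, smul_eq_mul, mul_comm]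

end Matrix

theorem InnerProductSpace.conj_inner_gramSchmidtOrthonormalBasis {𝕜 E ι : Type*} [RCLike 𝕜]
    [NormedAddCommGroup E] [InnerProductSpace 𝕜 E] [FiniteDimensional 𝕜 E] [LinearOrder ι]
    [LocallyFiniteOrderBot ι] [WellFoundedLT ι] [Fintype ι] (h : finrank 𝕜 E = Fintype.card ι)
    {f : ι → E} (hf : Pairwise fun i j => ⟪f i, f j⟫_𝕜 = 0) (i j : ι) :
    conj ⟪gramSchmidtOrthonormalBasis h f i, f j⟫_𝕜 =
      ⟪gramSchmidtOrthonormalBasis h f i, f j⟫_𝕜 := by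
  by_cases hi : f i = 0
  · have : gramSchmidtNormed 𝕜 f i = 0 := by
      simp [gramSchmidtNormed, gramSchmidt_of_orthogonal 𝕜 hf, hi]
    simp [inner_gramSchmidtOrthonormalBasis_eq_zero h this]
  rw [gramSchmidtOrthonormalBasis_apply_of_orthogonal h hf hi, inner_smul_left]
  rcases eq_or_ne i j with rfl | hij
  · simp [inner_self_eq_norm_sq_to_K]
  · simp [hf hij]

theorem exists_orthonormalBasis_inner_eq_conj_inner {E : Type*} [NormedAddCommGroup E]
    [InnerProductSpace ℂ E] [FiniteDimensional ℂ E] {m : ℕ} (hE : finrank ℂ E = m + 2)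
    {u v : E} (hnorm : ‖u‖ = ‖v‖) (hreal : conj ⟪u, v⟫_ℂ = ⟪u, v⟫_ℂ) :
    ∃ b : OrthonormalBasis (Fin (m + 2)) ℂ E, ∀ i, ⟪b i, u⟫_ℂ = conj ⟪b i, v⟫_ℂ := by
  set f : Fin (m + 2) → E := fun i =>
    if i = 0 then u + v else if i = 1 then Complex.I • (u - v) else 0
  have horth : ⟪u + v, Complex.I • (u - v)⟫_ℂ = 0 := by
    rw [inner_smul_right, inner_add_left, inner_sub_right, inner_sub_right, ← inner_conj_symm v u,
      hreal, inner_self_eq_norm_sq_to_K, inner_self_eq_norm_sq_to_K, hnorm]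
    ring
  have hf : Pairwise fun i j => ⟪f i, f j⟫_ℂ = 0 := by
    intro i j hij
    simp only [f]
    split_ifs <;> simp_all [inner_eq_zero_symm.mp horth]
  have hcard : finrank ℂ E = Fintype.card (Fin (m + 2)) := by simp [hE]
  set b := gramSchmidtOrthonormalBasis hcard f
  refine ⟨b, fun i => ?_⟩
  have h0 := conj_inner_gramSchmidtOrthonormalBasis hcard hf i 0
  have h1 := conj_inner_gramSchmidtOrthonormalBasis hcard hf i 1
  rw [show f 0 = u + v from if_pos rfl, inner_add_right, map_add] at h0
  rw [show f 1 = Complex.I • (u - v) from (if_neg one_ne_zero).trans (if_pos rfl),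
    inner_smul_right, inner_sub_right, map_mul, map_sub, Complex.conj_I] at h1
  linear_combination (Complex.I * h1 - h0) / 2 +
    (conj ⟪b i, u⟫_ℂ - conj ⟪b i, v⟫_ℂ + ⟪b i, u⟫_ℂ - ⟪b i, v⟫_ℂ) / 2 * Complex.I_sq

theorem Complex.exists_norm_eq_one_mul_eq_norm (z : ℂ) : ∃ c : ℂ, ‖c‖ = 1 ∧ c * z = ‖z‖ := by
  refine ⟨(exp (arg z * I))⁻¹, by rw [norm_inv, norm_exp_ofReal_mul_I, inv_one], ?_⟩
  nth_rw 2 [← norm_mul_exp_arg_mul_I z]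
  rw [mul_left_comm, inv_mul_cancel₀ (exp_ne_zero _), mul_one]

theorem EuclideanSpace.conjTranspose_basisFun_toMatrix_mulVec {𝕜 ι : Type*} [RCLike 𝕜] [Fintype ι]
    [DecidableEq ι] (b : OrthonormalBasis ι 𝕜 (EuclideanSpace 𝕜 ι)) (u : EuclideanSpace 𝕜 ι) :
    ((EuclideanSpace.basisFun ι 𝕜).toBasis.toMatrix b)ᴴ *ᵥ u.ofLp = fun i => ⟪b i, u⟫_𝕜 := by
  ext i
  simp [Matrix.mulVec, dotProduct, Module.Basis.toMatrix_apply, PiLp.inner_apply, mul_comm]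

theorem UECSM.smul {n : ℕ} {T : Matrix (Fin n) (Fin n) ℂ} (hT : UECSM T) (k : ℂ) :
    UECSM (k • T) := by
  obtain ⟨Q, hQ, hsymm⟩ := hT
  exact ⟨Q, hQ, by rw [mul_smul_comm, smul_mul_assoc, transpose_smul, hsymm]⟩

theorem uecsm_of_le_one {n : ℕ} (hn : n ≤ 1) (T : Matrix (Fin n) (Fin n) ℂ) : UECSM T := by
  have : Subsingleton (Fin n) := Fin.subsingleton_iff_le_one.mpr hn
  exact ⟨1, one_mem _, by ext i j; rw [transpose_apply, Subsingleton.elim i j]⟩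

theorem uecsm_vecMulVec_star_of_orthonormalBasis {n : ℕ}
    (b : OrthonormalBasis (Fin n) ℂ (EuclideanSpace ℂ (Fin n))) {u v : EuclideanSpace ℂ (Fin n)}
    (hb : ∀ i, ⟪b i, u⟫_ℂ = conj ⟪b i, v⟫_ℂ) : UECSM (vecMulVec u.ofLp (star v.ofLp)) := by
  set Q := (EuclideanSpace.basisFun (Fin n) ℂ).toBasis.toMatrix b
  have hQv : star v.ofLp ᵥ* Q = Qᴴ *ᵥ u.ofLp := by
    rw [← conjTranspose_conjTranspose Q, ← star_mulVec, conjTranspose_conjTranspose,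
      EuclideanSpace.conjTranspose_basisFun_toMatrix_mulVec,
      EuclideanSpace.conjTranspose_basisFun_toMatrix_mulVec]
    ext i
    simp [hb]
  refine ⟨Q, (EuclideanSpace.basisFun _ ℂ).toMatrix_orthonormalBasis_mem_unitary b, ?_⟩
  rw [mul_vecMulVec, vecMulVec_mul, hQv, transpose_vecMulVec]

theorem uecsm_vecMulVec_star {m : ℕ} {x y : EuclideanSpace ℂ (Fin (m + 2))} (hx : x ≠ 0)
    (hy : y ≠ 0) : UECSM (vecMulVec x.ofLp (star y.ofLp)) := by
  obtain ⟨c, hc, hcxy⟩ := Complex.exists_norm_eq_one_mul_eq_norm ⟪x, y⟫_ℂ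
  set u := (‖y‖ : ℂ) • x
  set v := ((‖x‖ : ℂ) * c) • y
  have hnorm : ‖u‖ = ‖v‖ := by
    simp only [u, v, norm_smul, norm_mul, hc, Complex.norm_real, norm_norm]
    ring
  have hreal : conj ⟪u, v⟫_ℂ = ⟪u, v⟫_ℂ := by
    have : ⟪u, v⟫_ℂ = (‖y‖ * ‖x‖ * ‖⟪x, y⟫_ℂ‖ : ℝ) := by
      simp only [u, v, inner_smul_left, inner_smul_right, Complex.conj_ofReal]
      push_cast
      rw [← hcxy]
      ring
    rw [this, Complex.conj_ofReal]
  obtain ⟨b, hb⟩ :=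
    exists_orthonormalBasis_inner_eq_conj_inner finrank_euclideanSpace_fin hnorm hreal
  set k : ℂ := ‖y‖ * ‖x‖ * conj c
  have hk : k ≠ 0 := by
    simp [k, hx, hy, ← norm_ne_zero_iff, hc]
  have hscale : vecMulVec x.ofLp (star y.ofLp) = k⁻¹ • vecMulVec u.ofLp (star v.ofLp) := by
    rw [eq_inv_smul_iff₀ hk]
    simp only [u, v, k, WithLp.ofLp_smul, star_smul, smul_vecMulVec, vecMulVec_smul, smul_smul]
    congr 1
    rw [star_mul', Complex.star_def, Complex.conj_ofReal]
    ring
  rw [hscale]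
  exact (uecsm_vecMulVec_star_of_orthonormalBasis b hb).smul _

theorem rank_one_uecsm {n : ℕ} (T : Matrix (Fin n) (Fin n) ℂ) (hT : T.rank = 1) :
    UECSM T := by
  obtain ⟨x, y, rfl⟩ := T.exists_eq_vecMulVec_of_rank_le_one hT.le
  have hx : x ≠ 0 := by rintro rfl; simp at hT
  have hy : y ≠ 0 := by rintro rfl; simp at hT
  rcases Nat.lt_or_ge n 2 with hn | hn
  · exact uecsm_of_le_one (by omega) _
  obtain ⟨m, rfl⟩ := Nat.exists_eq_add_of_le' hn
  simpa using uecsm_vecMulVec_star (x := WithLp.toLp 2 x) (y := WithLp.toLp 2 (star y))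
    (by simpa) (by simpa)
end

section
/- The Volterra operator T on L²[0,1], defined by (Tf)(x) = ∫₀ˣ f(y) dy, satisfies T = C T* C where C is the conjugation (Cf)(x) = conj(f(1−x)); consequently T is a complex symmetric operator. -/
/-!
Writing `⟪v, T u⟫` as the integral of `conj (v x) * u y` over the triangle `y ≤ x` of `[0,1]²`,
Fubini turns it into `∫ u(y) ∫_y^1 conj v`, and the measure-preserving reflection `x ↦ 1 - x`
identifies this with `⟪C u, T (C v)⟫`. As `C` is an antiunitary involution,
`⟪w, C T* C f⟫ = ⟪C f, T (C w)⟫`, which is therefore `⟪w, T f⟫`.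
-/

open scoped ComplexConjugate
open MeasureTheory Set

theorem integral_mul_setIntegral_Iic {α 𝕜 : Type*} [MeasurableSpace α] [TopologicalSpace α]
    [LinearOrder α] [OrderClosedTopology α] [SecondCountableTopology α] [OpensMeasurableSpace α]
    [RCLike 𝕜] {μ : Measure α} [SFinite μ] {f g : α → 𝕜} (hf : Integrable f μ)
    (hg : Integrable g μ) :
    ∫ x, f x * ∫ y in Iic x, g y ∂μ ∂μ = ∫ y, (∫ x in Ici y, f x ∂μ) * g y ∂μ := by
  set F : α × α → 𝕜 := {p | p.2 ≤ p.1}.indicator fun p => f p.1 * g p.2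
  have hF : Integrable F (μ.prod μ) :=
    (hf.mul_prod hg).indicator (measurableSet_le measurable_snd measurable_fst)
  calc ∫ x, f x * ∫ y in Iic x, g y ∂μ ∂μ = ∫ x, ∫ y, F (x, y) ∂μ ∂μ := by
        congr 1 with x
        rw [← integral_const_mul, ← integral_indicator measurableSet_Iic]
        rfl
    _ = ∫ y, ∫ x, F (x, y) ∂μ ∂μ := integral_integral_swap hF
    _ = ∫ y, (∫ x in Ici y, f x ∂μ) * g y ∂μ := by
        congr 1 with y
        rw [← integral_mul_const, ← integral_indicator measurableSet_Ici]
        rfl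

theorem measurePreserving_sub_left_restrict_Icc (a b : ℝ) :
    MeasurePreserving (fun x => a + b - x) (volume.restrict (Icc a b))
      (volume.restrict (Icc a b)) := by
  have hpre : (fun x => a + b - x) ⁻¹' Icc a b = Icc a b := by
    ext x
    simp only [mem_preimage, mem_Icc]
    constructor <;> intro h <;> constructor <;> linarith [h.1, h.2]
  simpa only [hpre] using (Measure.measurePreserving_sub_left volume (a + b)).restrict_preimage
    (measurableSet_Icc (a := a) (b := b))

local notation "μ₀" => volume.restrict (Icc (0 : ℝ) 1)

theorem measurePreserving_one_sub : MeasurePreserving (fun x : ℝ => 1 - x) μ₀ μ₀ := by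
  simpa using measurePreserving_sub_left_restrict_Icc 0 1

theorem Ioc_zero_ae_eq_Iic (x : ℝ) : (Ioc 0 x : Set ℝ) =ᵐ[μ₀] Iic x := by
  rw [Filter.eventuallyEq_set, ae_restrict_iff' measurableSet_Icc]
  filter_upwards [Measure.ae_ne volume (0 : ℝ)] with y hy hy01
  simp [hy01.1.lt_of_ne' hy]

theorem setIntegral_Iic_comp_one_sub {E : Type*} [NormedAddCommGroup E] [NormedSpace ℝ E]
    (g : ℝ → E) (x : ℝ) : ∫ y in Iic x, g (1 - y) ∂μ₀ = ∫ y in Ici (1 - x), g y ∂μ₀ := by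
  have hpre : (fun y : ℝ => 1 - y) ⁻¹' Ici (1 - x) = Iic x := by
    ext y
    simp only [mem_preimage, mem_Ici, mem_Iic]
    constructor <;> intro h <;> linarith
  rw [← hpre]
  exact measurePreserving_one_sub.setIntegral_preimage_emb
    (MeasurableEquiv.subLeft (1 : ℝ)).measurableEmbedding g _

theorem integral_mul_setIntegral_Iic_comp_one_sub {𝕜 : Type*} [RCLike 𝕜] {f g : ℝ → 𝕜}
    (hf : Integrable f μ₀) (hg : Integrable g μ₀) :
    ∫ x, g x * ∫ y in Iic x, f y ∂μ₀ ∂μ₀ = ∫ x, f (1 - x) * ∫ y in Iic x, g (1 - y) ∂μ₀ ∂μ₀ := by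
  simp_rw [integral_mul_setIntegral_Iic hg hf, setIntegral_Iic_comp_one_sub, mul_comm _ (f _)]
  exact (measurePreserving_one_sub.integral_comp
    (MeasurableEquiv.subLeft (1 : ℝ)).measurableEmbedding fun x => f x * ∫ y in Ici x, g y ∂μ₀).symm

theorem inner_volterra_eq_integral (T : Lp ℂ 2 μ₀ → Lp ℂ 2 μ₀)
    (hT : ∀ f : Lp ℂ 2 μ₀, (T f : ℝ → ℂ) =ᵐ[μ₀] fun x => ∫ y in Ioc (0 : ℝ) x, f y ∂μ₀)
    (u v : Lp ℂ 2 μ₀) :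
    inner ℂ v (T u) = ∫ x, conj (v x) * ∫ y in Iic x, u y ∂μ₀ ∂μ₀ := by
  rw [L2.inner_def]
  refine integral_congr_ae ?_
  filter_upwards [hT u] with x hx
  rw [RCLike.inner_apply', hx, setIntegral_congr_set (Ioc_zero_ae_eq_Iic x)]

theorem inner_volterra_eq_inner_reflect (T : Lp ℂ 2 μ₀ → Lp ℂ 2 μ₀)
    (hT : ∀ f : Lp ℂ 2 μ₀, (T f : ℝ → ℂ) =ᵐ[μ₀] fun x => ∫ y in Ioc (0 : ℝ) x, f y ∂μ₀)
    (C : Lp ℂ 2 μ₀ → Lp ℂ 2 μ₀)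
    (hC : ∀ f : Lp ℂ 2 μ₀, (C f : ℝ → ℂ) =ᵐ[μ₀] fun x => conj ((f : ℝ → ℂ) (1 - x)))
    (u v : Lp ℂ 2 μ₀) :
    inner ℂ v (T u) = inner ℂ (C u) (T (C v)) := by
  have hint (h : Lp ℂ 2 μ₀) : Integrable h μ₀ := (Lp.memLp h).integrable one_le_two
  have hv : Integrable (fun x => conj (v x)) μ₀ := Complex.conjLIE.integrable_comp_iff.2 (hint v)
  rw [inner_volterra_eq_integral T hT, inner_volterra_eq_integral T hT,
    integral_mul_setIntegral_Iic_comp_one_sub (hint u) hv]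
  refine integral_congr_ae ?_
  filter_upwards [hC u] with x hx
  rw [hx, Complex.conj_conj, integral_congr_ae (ae_restrict_of_ae (hC v))]

theorem volterra_complex_symmetric_general
    (μ : Measure ℝ) (hμ : μ = volume.restrict (Set.Icc (0 : ℝ) 1))
    (T : Lp ℂ 2 μ →L[ℂ] Lp ℂ 2 μ)
    (hT : ∀ f : Lp ℂ 2 μ, (T f : ℝ → ℂ) =ᵐ[μ] fun x => ∫ y in Set.Ioc (0 : ℝ) x, f y ∂μ)
    (C : Lp ℂ 2 μ → Lp ℂ 2 μ)
    (hCiso : ∀ f g, inner (𝕜 := ℂ) (C f) (C g) = inner (𝕜 := ℂ) g f)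
    (hCinv : ∀ f, C (C f) = f)
    (hC : ∀ f : Lp ℂ 2 μ, (C f : ℝ → ℂ) =ᵐ[μ] fun x => conj ((f : ℝ → ℂ) (1 - x))) :
    ∀ f : Lp ℂ 2 μ, T f = C (ContinuousLinearMap.adjoint T (C f)) := by
  subst hμ
  intro f
  refine ext_inner_left ℂ fun w => ?_
  calc inner ℂ w (T f) = inner ℂ (C f) (T (C w)) := inner_volterra_eq_inner_reflect T hT C hC f w
    _ = inner ℂ (ContinuousLinearMap.adjoint T (C f)) (C w) :=
        (ContinuousLinearMap.adjoint_inner_left T _ _).symm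
    _ = inner ℂ (C (C w)) (C (ContinuousLinearMap.adjoint T (C f))) := (hCiso _ _).symm
    _ = inner ℂ w (C (ContinuousLinearMap.adjoint T (C f))) := by rw [hCinv]

/-- The Volterra operator is C-symmetric for the conjugation (Cf)(x) = conj(f(1-x)). -/
theorem volterra_complex_symmetric
    (μ : Measure ℝ) (hμ : μ = volume.restrict (Set.Icc (0 : ℝ) 1))
    (T : Lp ℂ 2 μ →L[ℂ] Lp ℂ 2 μ)
    (hT : ∀ f : Lp ℂ 2 μ, (T f : ℝ → ℂ) =ᵐ[μ] fun x => ∫ y in Set.Ioc (0 : ℝ) x, f y ∂μ)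
    (C : Lp ℂ 2 μ → Lp ℂ 2 μ)
    (hCadd : ∀ f g, C (f + g) = C f + C g)
    (hCsmul : ∀ (a : ℂ) (f), C (a • f) = conj a • C f)
    (hCiso : ∀ f g, inner (𝕜 := ℂ) (C f) (C g) = inner (𝕜 := ℂ) g f)
    (hCinv : ∀ f, C (C f) = f)
    (hC : ∀ f : Lp ℂ 2 μ, (C f : ℝ → ℂ) =ᵐ[μ] fun x => conj ((f : ℝ → ℂ) (1 - x))) :
    ∀ f : Lp ℂ 2 μ, T f = C (ContinuousLinearMap.adjoint T (C f)) :=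
  volterra_complex_symmetric_general μ hμ T hT C hCiso hCinv hC
end

section
/- For the Volterra operator T on L²[0,1], the eigenvalues of T*T are λₙ = (2/((2n+1)π))² with corresponding normalized eigenvectors uₙ(x) = √2 cos[(n+½)πx], and the eigenvectors of TT* for the same eigenvalues are vₙ(x) = √2 sin[(n+½)πx], and these satisfy ⟨uᵢ, vⱼ⟩ = (−1)^{i+j} ⟨uⱼ, vᵢ⟩ for all i, j ≥ 0. -/
/-!
Write `uₘ = √2 cos(kₘ x)` and `vₘ = √2 sin(kₘ x)` with `kₘ = (m + 1/2)π`, so that `cos kₘ = 0`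
and `sin kₘ = (-1)^m`. Integrating gives `T uₘ = kₘ⁻¹ vₘ` directly. By Fubini, `T*` is
`g ↦ (y ↦ ∫_y^1 g)`, and because `cos kₘ = 0` this gives `T* vₘ = kₘ⁻¹ uₘ`, so both `T*T` and
`TT*` have eigenvalue `kₘ⁻² = (2/((2m+1)π))²`.

For the sign relation, `∫₀¹ sin(ax) cos(bx) = (S(a+b) + S(a-b))/2` with the odd function
`S(c) = (1 - cos c)/c`. Swapping `i` and `j` flips the sign of the second term only. Since
`cos(kᵢ + kⱼ) = -(-1)^(i+j)` and `cos(kᵢ - kⱼ) = (-1)^(i+j)`, the second term vanishes when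
`i + j` is even and the first term vanishes when it is odd.
-/

open scoped ComplexConjugate Real
open MeasureTheory Real Set

theorem integral_setIntegral_Iic_mul_eq_integral_mul_setIntegral_Ici {𝕜 : Type*} [RCLike 𝕜]
    {μ : Measure ℝ} [SFinite μ] {f g : ℝ → 𝕜} (hf : Integrable f μ) (hg : Integrable g μ) :
    ∫ x, (∫ y in Iic x, f y ∂μ) * g x ∂μ = ∫ y, f y * ∫ x in Ici y, g x ∂μ ∂μ := by
  let F : ℝ → ℝ → 𝕜 := fun x y =>
    {p : ℝ × ℝ | p.2 ≤ p.1}.indicator (fun p => f p.2 * g p.1) (x, y)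
  have hF : Integrable (Function.uncurry F) (μ.prod μ) :=
    (hf.mul_prod hg).swap.indicator (measurableSet_le measurable_snd measurable_fst)
  calc ∫ x, (∫ y in Iic x, f y ∂μ) * g x ∂μ = ∫ x, ∫ y, F x y ∂μ ∂μ := by
        congr 1 with x
        rw [← integral_mul_const, ← integral_indicator measurableSet_Iic]
        congr 1 with y
    _ = ∫ y, ∫ x, F x y ∂μ ∂μ := integral_integral_swap hF
    _ = ∫ y, f y * ∫ x in Ici y, g x ∂μ ∂μ := by
        congr 1 with y
        rw [← integral_const_mul, ← integral_indicator measurableSet_Ici]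
        congr 1 with x

theorem MeasureTheory.L2.inner_eq_ofReal_integral_of_ae_eq {α : Type*} [MeasurableSpace α]
    {μ : Measure α} {f g : Lp ℂ 2 μ} {φ ψ : α → ℝ} (hf : (f : α → ℂ) =ᵐ[μ] fun x => (φ x : ℂ))
    (hg : (g : α → ℂ) =ᵐ[μ] fun x => (ψ x : ℂ)) :
    inner ℂ f g = ((∫ x, φ x * ψ x ∂μ : ℝ) : ℂ) := by
  rw [L2.inner_def, ← integral_complex_ofReal]
  refine integral_congr_ae ?_
  filter_upwards [hf, hg] with x hfx hgx
  simp [hfx, hgx, mul_comm]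

theorem MeasureTheory.L2.norm_eq_sqrt_integral_sq_of_ae_eq {α : Type*} [MeasurableSpace α]
    {μ : Measure α} {f : Lp ℂ 2 μ} {φ : α → ℝ} (hf : (f : α → ℂ) =ᵐ[μ] fun x => (φ x : ℂ)) :
    ‖f‖ = √(∫ x, φ x ^ 2 ∂μ) := by
  rw [norm_eq_sqrt_re_inner (𝕜 := ℂ), L2.inner_eq_ofReal_integral_of_ae_eq hf hf,
    RCLike.re_to_complex, Complex.ofReal_re]
  simp only [sq]

theorem integral_sin_mul (c a b : ℝ) :
    ∫ x in a..b, sin (c * x) = (cos (c * a) - cos (c * b)) / c := by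
  rcases eq_or_ne c 0 with rfl | hc
  · simp
  · rw [intervalIntegral.integral_comp_mul_left _ hc, integral_sin, smul_eq_mul, inv_mul_eq_div]

theorem integral_cos_mul {c : ℝ} (hc : c ≠ 0) (a b : ℝ) :
    ∫ x in a..b, cos (c * x) = (sin (c * b) - sin (c * a)) / c := by
  rw [intervalIntegral.integral_comp_mul_left _ hc, integral_cos, smul_eq_mul, inv_mul_eq_div]

theorem integral_cos_mul_sq_of_cos_eq_zero {a : ℝ} (ha : cos a = 0) :
    ∫ x in (0 : ℝ)..1, cos (a * x) ^ 2 = 1 / 2 := by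
  have ha0 : a ≠ 0 := by rintro rfl; simp at ha
  rw [intervalIntegral.integral_comp_mul_left (fun x => cos x ^ 2) ha0, integral_cos_sq]
  simp only [mul_one, mul_zero, ha, zero_mul, sin_zero, sub_self, zero_add, sub_zero, smul_eq_mul]
  field_simp

theorem integral_sin_mul_sq_of_cos_eq_zero {a : ℝ} (ha : cos a = 0) :
    ∫ x in (0 : ℝ)..1, sin (a * x) ^ 2 = 1 / 2 := by
  have ha0 : a ≠ 0 := by rintro rfl; simp at ha
  rw [intervalIntegral.integral_comp_mul_left (fun x => sin x ^ 2) ha0, integral_sin_sq]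
  simp only [mul_one, mul_zero, ha, sin_zero, zero_mul, sub_self, zero_add, sub_zero,
    smul_eq_mul]
  field_simp

theorem integral_sin_mul_mul_cos_mul (a b : ℝ) :
    ∫ x in (0 : ℝ)..1, sin (a * x) * cos (b * x)
      = ((1 - cos (a + b)) / (a + b) + (1 - cos (a - b)) / (a - b)) / 2 := by
  have h : ∀ x : ℝ, sin (a * x) * cos (b * x) = (sin ((a + b) * x) + sin ((a - b) * x)) / 2 := by
    intro x
    rw [add_mul, sub_mul, sin_add, sin_sub]
    ring
  simp_rw [h]
  rw [intervalIntegral.integral_div, intervalIntegral.integral_add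
    (Continuous.intervalIntegrable (by fun_prop) _ _)
    (Continuous.intervalIntegrable (by fun_prop) _ _), integral_sin_mul, integral_sin_mul]
  simp

namespace Volterra

noncomputable def freq (m : ℕ) : ℝ := ((m : ℝ) + 1 / 2) * π

theorem cos_freq (m : ℕ) : cos (freq m) = 0 := by
  rw [freq, add_mul, one_div_mul_eq_div, cos_add_pi_div_two, sin_nat_mul_pi, neg_zero]

theorem sin_freq (m : ℕ) : sin (freq m) = (-1) ^ m := by
  rw [freq, add_mul, one_div_mul_eq_div, sin_add_pi_div_two, cos_nat_mul_pi]

theorem freq_ne_zero (m : ℕ) : freq m ≠ 0 := fun h => by simpa [h] using cos_freq m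

theorem inv_freq_mul_inv_freq (m : ℕ) :
    (freq m)⁻¹ * (freq m)⁻¹ = (2 / ((2 * (m : ℝ) + 1) * π)) ^ 2 := by
  rw [show (2 * (m : ℝ) + 1) * π = 2 * freq m by rw [freq]; ring]
  field_simp [freq_ne_zero m]

theorem integral_sq_sqrt_two_mul_cos_freq (m : ℕ) :
    ∫ x in (0 : ℝ)..1, (√2 * cos (freq m * x)) ^ 2 = 1 := by
  simp_rw [mul_pow, sq_sqrt zero_le_two]
  rw [intervalIntegral.integral_const_mul, integral_cos_mul_sq_of_cos_eq_zero (cos_freq m)]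
  norm_num

theorem integral_sq_sqrt_two_mul_sin_freq (m : ℕ) :
    ∫ x in (0 : ℝ)..1, (√2 * sin (freq m * x)) ^ 2 = 1 := by
  simp_rw [mul_pow, sq_sqrt zero_le_two]
  rw [intervalIntegral.integral_const_mul, integral_sin_mul_sq_of_cos_eq_zero (cos_freq m)]
  norm_num

theorem integral_sin_freq_mul_cos_freq_comm (i j : ℕ) :
    ∫ x in (0 : ℝ)..1, √2 * sin (freq j * x) * (√2 * cos (freq i * x))
      = (-1) ^ (i + j) * ∫ x in (0 : ℝ)..1, √2 * sin (freq i * x) * (√2 * cos (freq j * x)) := by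
  have hsum : cos (freq i + freq j) = -(-1) ^ (i + j) := by
    rw [cos_add, cos_freq, sin_freq, sin_freq, pow_add]
    ring
  have hdiff : cos (freq i - freq j) = (-1) ^ (i + j) := by
    rw [cos_sub, cos_freq, sin_freq, sin_freq, pow_add]
    ring
  have hsqrt : ∀ a b : ℝ, √2 * a * (√2 * b) = 2 * (a * b) := fun a b => by
    linear_combination a * b * mul_self_sqrt (zero_le_two : (0 : ℝ) ≤ 2)
  simp_rw [hsqrt, intervalIntegral.integral_const_mul, integral_sin_mul_mul_cos_mul]
  rw [add_comm (freq j), ← neg_sub (freq i), cos_neg, hsum, hdiff, div_neg]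
  rcases neg_one_pow_eq_or ℝ (i + j) with h | h <;> rw [h] <;> ring

local notation "μ₀" => volume.restrict (Icc (0 : ℝ) 1)

theorem integral_eq_intervalIntegral {E : Type*} [NormedAddCommGroup E] [NormedSpace ℝ E]
    (φ : ℝ → E) : ∫ x, φ x ∂μ₀ = ∫ x in (0 : ℝ)..1, φ x := by
  rw [intervalIntegral.integral_of_le zero_le_one, integral_Icc_eq_integral_Ioc]

theorem ae_pos : ∀ᵐ x ∂μ₀, 0 < x := by
  rw [Measure.restrict_congr_set Ioc_ae_eq_Icc.symm]
  exact (ae_restrict_mem measurableSet_Ioc).mono fun x hx => hx.1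

theorem setIntegral_Ioc_zero_eq_setIntegral_Iic (f : ℝ → ℂ) (x : ℝ) :
    ∫ y in Ioc 0 x, f y ∂μ₀ = ∫ y in Iic x, f y ∂μ₀ := by
  refine setIntegral_congr_set ?_
  filter_upwards [ae_pos] with y hy
  exact propext ⟨fun h => h.2, fun h => ⟨hy, h⟩⟩

theorem setIntegral_Ioc_zero_eq_intervalIntegral {f φ : ℝ → ℂ} (hf : f =ᵐ[μ₀] φ) {x : ℝ}
    (hx : x ∈ Icc (0 : ℝ) 1) : ∫ y in Ioc 0 x, f y ∂μ₀ = ∫ y in (0 : ℝ)..x, φ y := by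
  rw [setIntegral_congr_ae measurableSet_Ioc (hf.mono fun _ h _ => h),
    Measure.restrict_restrict measurableSet_Ioc,
    inter_eq_left.mpr (Ioc_subset_Icc_self.trans (Icc_subset_Icc_right hx.2)),
    intervalIntegral.integral_of_le hx.1]

theorem setIntegral_Ici_eq_intervalIntegral {f φ : ℝ → ℂ} (hf : f =ᵐ[μ₀] φ) {y : ℝ}
    (hy : y ∈ Icc (0 : ℝ) 1) : ∫ x in Ici y, f x ∂μ₀ = ∫ x in y..1, φ x := by
  have hIci : Ici y ∩ Icc 0 1 = Icc y 1 :=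
    ext fun x => ⟨fun h => ⟨h.1, h.2.2⟩, fun h => ⟨h.1, hy.1.trans h.1, h.2⟩⟩
  rw [setIntegral_congr_ae measurableSet_Ici (hf.mono fun _ h _ => h),
    Measure.restrict_restrict measurableSet_Ici, hIci, integral_Icc_eq_integral_Ioc,
    intervalIntegral.integral_of_le hy.2]

variable {T : Lp ℂ 2 μ₀ →L[ℂ] Lp ℂ 2 μ₀}

theorem adjoint_apply_eq_of_ae_eq
    (hT : ∀ f : Lp ℂ 2 μ₀, (T f : ℝ → ℂ) =ᵐ[μ₀] fun x => ∫ y in Ioc 0 x, f y ∂μ₀)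
    {g h : Lp ℂ 2 μ₀} (hh : (h : ℝ → ℂ) =ᵐ[μ₀] fun y => ∫ x in Ici y, g x ∂μ₀) :
    ContinuousLinearMap.adjoint T g = h := by
  refine ext_inner_right ℂ fun f => ?_
  have hf : Integrable (f : ℝ → ℂ) μ₀ := (Lp.memLp f).integrable one_le_two
  have hg : Integrable (fun x => conj ((g : ℝ → ℂ) x)) μ₀ :=
    RCLike.conjCLE.toContinuousLinearMap.integrable_comp ((Lp.memLp g).integrable one_le_two)
  simp only [ContinuousLinearMap.adjoint_inner_left, L2.inner_def, RCLike.inner_apply]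
  calc ∫ x, (T f : ℝ → ℂ) x * conj ((g : ℝ → ℂ) x) ∂μ₀
      = ∫ x, (∫ y in Iic x, (f : ℝ → ℂ) y ∂μ₀) * conj ((g : ℝ → ℂ) x) ∂μ₀ := by
        refine integral_congr_ae ?_
        filter_upwards [hT f] with x hx
        rw [hx, setIntegral_Ioc_zero_eq_setIntegral_Iic]
    _ = ∫ y, (f : ℝ → ℂ) y * ∫ x in Ici y, conj ((g : ℝ → ℂ) x) ∂μ₀ ∂μ₀ :=
        integral_setIntegral_Iic_mul_eq_integral_mul_setIntegral_Ici hf hg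
    _ = ∫ y, (f : ℝ → ℂ) y * conj ((h : ℝ → ℂ) y) ∂μ₀ := by
        refine integral_congr_ae ?_
        filter_upwards [hh] with y hy
        rw [hy, integral_conj]

variable {m : ℕ} {u v : Lp ℂ 2 μ₀}

theorem apply_cos_mode
    (hT : ∀ f : Lp ℂ 2 μ₀, (T f : ℝ → ℂ) =ᵐ[μ₀] fun x => ∫ y in Ioc 0 x, f y ∂μ₀)
    (hu : (u : ℝ → ℂ) =ᵐ[μ₀] fun x => ((√2 * cos (freq m * x) : ℝ) : ℂ))
    (hv : (v : ℝ → ℂ) =ᵐ[μ₀] fun x => ((√2 * sin (freq m * x) : ℝ) : ℂ)) :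
    T u = (((freq m)⁻¹ : ℝ) : ℂ) • v := by
  refine Lp.ext ?_
  filter_upwards [hT u, Lp.coeFn_smul (((freq m)⁻¹ : ℝ) : ℂ) v, hv,
    ae_restrict_mem measurableSet_Icc] with x hTx hsx hvx hx
  rw [hTx, setIntegral_Ioc_zero_eq_intervalIntegral hu hx, hsx, Pi.smul_apply, hvx,
    intervalIntegral.integral_ofReal, intervalIntegral.integral_const_mul,
    integral_cos_mul (freq_ne_zero m), mul_zero, sin_zero, sub_zero]
  simp only [Complex.ofReal_mul, Complex.ofReal_div, Complex.ofReal_inv, smul_eq_mul]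
  ring

theorem adjoint_apply_sin_mode
    (hT : ∀ f : Lp ℂ 2 μ₀, (T f : ℝ → ℂ) =ᵐ[μ₀] fun x => ∫ y in Ioc 0 x, f y ∂μ₀)
    (hu : (u : ℝ → ℂ) =ᵐ[μ₀] fun x => ((√2 * cos (freq m * x) : ℝ) : ℂ))
    (hv : (v : ℝ → ℂ) =ᵐ[μ₀] fun x => ((√2 * sin (freq m * x) : ℝ) : ℂ)) :
    ContinuousLinearMap.adjoint T v = (((freq m)⁻¹ : ℝ) : ℂ) • u := by
  refine adjoint_apply_eq_of_ae_eq hT ?_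
  filter_upwards [Lp.coeFn_smul (((freq m)⁻¹ : ℝ) : ℂ) u, hu,
    ae_restrict_mem measurableSet_Icc] with y hsy huy hy
  rw [hsy, Pi.smul_apply, huy, setIntegral_Ici_eq_intervalIntegral hv hy,
    intervalIntegral.integral_ofReal, intervalIntegral.integral_const_mul, integral_sin_mul,
    mul_one, cos_freq, sub_zero]
  simp only [Complex.ofReal_mul, Complex.ofReal_div, Complex.ofReal_inv, smul_eq_mul]
  ring

end Volterra

open Volterra

/-- Eigenvalues/eigenvectors of T*T and TT* for the Volterra operator T, and the
sign relation ⟨uᵢ, vⱼ⟩ = (−1)^(i+j) ⟨uⱼ, vᵢ⟩ (paper convention: ⟨f,g⟩ = ∫ f conj g). -/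
theorem volterra_modulus_eigendata
    (μ : Measure ℝ) (hμ : μ = volume.restrict (Set.Icc (0 : ℝ) 1))
    (T : Lp ℂ 2 μ →L[ℂ] Lp ℂ 2 μ)
    (hT : ∀ f : Lp ℂ 2 μ, (T f : ℝ → ℂ) =ᵐ[μ] fun x => ∫ y in Set.Ioc (0 : ℝ) x, f y ∂μ)
    (u v : ℕ → Lp ℂ 2 μ)
    (hu : ∀ m : ℕ, (u m : ℝ → ℂ) =ᵐ[μ]
      fun x => ((Real.sqrt 2 * Real.cos (((m : ℝ) + 1 / 2) * π * x) : ℝ) : ℂ))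
    (hv : ∀ m : ℕ, (v m : ℝ → ℂ) =ᵐ[μ]
      fun x => ((Real.sqrt 2 * Real.sin (((m : ℝ) + 1 / 2) * π * x) : ℝ) : ℂ)) :
    (∀ m : ℕ, ‖u m‖ = 1) ∧ (∀ m : ℕ, ‖v m‖ = 1) ∧
    (∀ m : ℕ, ContinuousLinearMap.adjoint T (T (u m)) =
      (((2 / ((2 * (m : ℝ) + 1) * π)) ^ 2 : ℝ) : ℂ) • u m) ∧
    (∀ m : ℕ, T (ContinuousLinearMap.adjoint T (v m)) =
      (((2 / ((2 * (m : ℝ) + 1) * π)) ^ 2 : ℝ) : ℂ) • v m) ∧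
    (∀ i j : ℕ, inner (𝕜 := ℂ) (v j) (u i) = (-1 : ℂ) ^ (i + j) * inner (𝕜 := ℂ) (v i) (u j)) := by
  subst hμ
  simp only [← freq.eq_1] at hu hv
  have hTu (m : ℕ) := apply_cos_mode hT (hu m) (hv m)
  have hTv (m : ℕ) := adjoint_apply_sin_mode hT (hu m) (hv m)
  refine ⟨fun m => ?_, fun m => ?_, fun m => ?_, fun m => ?_, fun i j => ?_⟩
  · rw [L2.norm_eq_sqrt_integral_sq_of_ae_eq (hu m), integral_eq_intervalIntegral,
      integral_sq_sqrt_two_mul_cos_freq, sqrt_one]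
  · rw [L2.norm_eq_sqrt_integral_sq_of_ae_eq (hv m), integral_eq_intervalIntegral,
      integral_sq_sqrt_two_mul_sin_freq, sqrt_one]
  · rw [hTu, map_smul, hTv, smul_smul, ← Complex.ofReal_mul, inv_freq_mul_inv_freq]
  · rw [hTv, map_smul, hTu, smul_smul, ← Complex.ofReal_mul, inv_freq_mul_inv_freq]
  · rw [L2.inner_eq_ofReal_integral_of_ae_eq (hv j) (hu i),
      L2.inner_eq_ofReal_integral_of_ae_eq (hv i) (hu j), integral_eq_intervalIntegral,
      integral_eq_intervalIntegral, integral_sin_freq_mul_cos_freq_comm]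
    norm_cast
end
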